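/- Let Δ ⊂ Φ be a root subsystem and suppose v₁ ∈ W^J satisfies v₁(Δ) = Φ^J for some subset J of simple roots. Let u ∈ W_J and let u' = v₁⁻¹ u v₁ ∈ W_Δ. Then the flattening f_Δ(w) equals u' if and only if there exists v₂ ∈ W^J with w = v₁⁻¹ u v₂. -/

import Mathlib

open scoped RealInnerProductSpace

variable {V : Type*} [NormedAddCommGroup V] [InnerProductSpace ℝ V] [FiniteDimensional ℝ V]

/-- The reflection in the hyperplane orthogonal to `α`. -/
noncomputable def rootReflection (α : V) : V ≃ₗᵢ[ℝ] V := Submodule.reflection (ℝ ∙ α)ᗮ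

/-- A finite crystallographic (reduced) root system in `V`. -/
structure IsRootSystem (Φ : Set V) : Prop where
  finite : Φ.Finite
  ne_zero : ∀ α ∈ Φ, α ≠ 0
  reflect_mem : ∀ α ∈ Φ, ∀ β ∈ Φ, rootReflection α β ∈ Φ
  crystal : ∀ α ∈ Φ, ∀ β ∈ Φ, ∃ k : ℤ, 2 * ⟪β, α⟫ / ⟪α, α⟫ = (k : ℝ)
  reduced : ∀ α ∈ Φ, ∀ t : ℝ, t • α ∈ Φ → t = 1 ∨ t = -1

/-- `P` is a system of positive roots for `Φ`, cut out by a linear functional. -/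
def IsPositiveSystem (Φ P : Set V) : Prop :=
  ∃ h : V →ₗ[ℝ] ℝ, (∀ α ∈ Φ, h α ≠ 0) ∧ P = {α ∈ Φ | 0 < h α}

/-- The Weyl group: the subgroup of isometries generated by the root reflections. -/
noncomputable def weylGroup (Φ : Set V) : Subgroup (V ≃ₗᵢ[ℝ] V) :=
  Subgroup.closure {g | ∃ α ∈ Φ, g = rootReflection α}

/-- The inversion set `I(w) = Φ₊ ∩ w(Φ₋)`. -/
def invSet (P : Set V) (w : V ≃ₗᵢ[ℝ] V) : Set V := P ∩ (⇑w '' (-P))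

/-- A simple root: a positive root that is not the sum of two positive roots. -/
def IsSimpleRoot (P : Set V) (α : V) : Prop :=
  α ∈ P ∧ ¬∃ β ∈ P, ∃ γ ∈ P, α = β + γ

/-- The length of `w`: minimal length of a word in simple reflections for `w`. -/
noncomputable def wlen (P : Set V) (w : V ≃ₗᵢ[ℝ] V) : ℕ :=
  sInf {n | ∃ l : List V, (∀ α ∈ l, IsSimpleRoot P α) ∧ l.length = n ∧
    (l.map rootReflection).prod = w}

/-- Bruhat order. -/
def bruhatLE (Φ P : Set V) : (V ≃ₗᵢ[ℝ] V) → (V ≃ₗᵢ[ℝ] V) → Prop :=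
  Relation.ReflTransGen fun a b =>
    (∃ α ∈ Φ, b = rootReflection α * a) ∧ wlen P a < wlen P b

def bruhatLT (Φ P : Set V) (a b : V ≃ₗᵢ[ℝ] V) : Prop := bruhatLE Φ P a b ∧ a ≠ b

/-- The parabolic subgroup generated by reflections in the roots of `J`. -/
noncomputable def parabolic (J : Set V) : Subgroup (V ≃ₗᵢ[ℝ] V) :=
  Subgroup.closure {g | ∃ α ∈ J, g = rootReflection α}

/-- Minimal length representatives of the cosets `W_J\W`. -/
def minReps (Φ P J : Set V) : Set (V ≃ₗᵢ[ℝ] V) :=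
  {v | v ∈ weylGroup Φ ∧ ∀ u ∈ parabolic J, wlen P v ≤ wlen P (u * v)}

/-!
For `α ∈ Δ₊` the equation of inversion sets says that `(v₁⁻¹ u v₁)⁻¹ α` and `w⁻¹ α` have the
same sign, hence, `Δ` being symmetric, this holds for all `α ∈ Δ`. Write `α = v₁⁻¹ u β` with
`β ∈ Φ^J`: then `(v₁⁻¹ u v₁)⁻¹ α = v₁⁻¹ β` has the sign of `β` because `v₁ ∈ W^J`, so the condition
reads `β > 0 ↔ w⁻¹ v₁⁻¹ u β > 0` on `Φ^J`, i.e., by symmetry again, `(u⁻¹ v₁ w)⁻¹ Φ^J₊ ⊆ Φ₊`.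
That is the membership `u⁻¹ v₁ w ∈ W^J`, since `v ∈ W^J` exactly when `v⁻¹ Φ^J₊ ⊆ Φ₊`; this
characterization comes from length = number of inversions and the expansion of positive roots
as nonnegative combinations of simple roots.
-/

section

omit [FiniteDimensional ℝ V]

noncomputable def corootPairing (α x : V) : ℝ := 2 * ⟪α, x⟫ / ⟪α, α⟫

theorem rootReflection_apply (α x : V) : rootReflection α x = x - corootPairing α x • α := by
  rw [rootReflection, Submodule.reflection_orthogonal_apply, Submodule.reflection_apply,
    corootPairing, Submodule.starProjection_singleton, real_inner_self_eq_norm_sq, two_smul]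
  simp only [RCLike.ofReal_real_eq_id, id_eq]
  module

theorem rootReflection_self (α : V) : rootReflection α α = -α :=
  Submodule.reflection_orthogonalComplement_singleton_eq_neg α

theorem rootReflection_rootReflection (α x : V) : rootReflection α (rootReflection α x) = x :=
  Submodule.reflection_reflection _ x

theorem rootReflection_mul_self (α : V) : rootReflection α * rootReflection α = 1 :=
  LinearIsometryEquiv.ext (rootReflection_rootReflection α)

theorem rootReflection_inv (α : V) : (rootReflection α)⁻¹ = rootReflection α :=
  inv_eq_of_mul_eq_one_right (rootReflection_mul_self α)

theorem corootPairing_map (g : V ≃ₗᵢ[ℝ] V) (α x : V) :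
    corootPairing (g α) (g x) = corootPairing α x := by
  simp only [corootPairing, LinearIsometryEquiv.inner_map_map]

theorem rootReflection_map (g : V ≃ₗᵢ[ℝ] V) (α : V) :
    rootReflection (g α) = g * rootReflection α * g⁻¹ := by
  ext x
  obtain ⟨y, rfl⟩ := g.surjective x
  simp [rootReflection_apply, corootPairing_map]

theorem rootReflection_neg (α : V) : rootReflection (-α) = rootReflection α := by
  ext x
  simp [rootReflection_apply, corootPairing, neg_div, sub_eq_add_neg]

theorem rootReflection_mem_parabolic {R : Set V} {α : V} (hα : α ∈ R) :
    rootReflection α ∈ parabolic R :=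
  Subgroup.subset_closure ⟨α, hα, rfl⟩

theorem parabolic_mono {R S : Set V} (h : R ⊆ S) : parabolic R ≤ parabolic S :=
  Subgroup.closure_mono fun _ ⟨α, hα, hg⟩ => ⟨α, h hα, hg⟩

theorem prod_map_rootReflection_mem_parabolic {R : Set V} {l : List V} (hl : ∀ α ∈ l, α ∈ R) :
    (l.map rootReflection).prod ∈ parabolic R :=
  (parabolic R).list_prod_mem (by simpa using fun α hα => rootReflection_mem_parabolic (hl α hα))

theorem apply_iff_of_mem_parabolic {R : Set V} {p : V → Prop}
    (hp : ∀ α ∈ R, ∀ x, p x → p (rootReflection α x)) {w : V ≃ₗᵢ[ℝ] V} (hw : w ∈ parabolic R)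
    (x : V) : p (w x) ↔ p x := by
  induction hw using Subgroup.closure_induction generalizing x with
  | mem g hg =>
    obtain ⟨α, hα, rfl⟩ := hg
    exact ⟨fun h => rootReflection_rootReflection α x ▸ hp α hα _ h, hp α hα x⟩
  | one => rfl
  | mul a b _ _ ha hb => exact (ha (b x)).trans (hb x)
  | inv a _ ha => simpa using (ha (a⁻¹ x)).symm

theorem IsRootSystem.apply_mem_iff {Φ : Set V} (hΦ : IsRootSystem Φ) {w : V ≃ₗᵢ[ℝ] V}
    (hw : w ∈ weylGroup Φ) (x : V) : w x ∈ Φ ↔ x ∈ Φ :=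
  apply_iff_of_mem_parabolic (p := (· ∈ Φ)) (fun α hα x hx => hΦ.reflect_mem α hα x hx) hw x

theorem apply_mem_span_iff {J : Set V} {u : V ≃ₗᵢ[ℝ] V} (hu : u ∈ parabolic J) (x : V) :
    u x ∈ Submodule.span ℝ J ↔ x ∈ Submodule.span ℝ J := by
  refine apply_iff_of_mem_parabolic (fun α hα x hx => ?_) hu x
  rw [rootReflection_apply]
  exact sub_mem hx (Submodule.smul_mem _ _ (Submodule.subset_span hα))

theorem IsRootSystem.neg_mem {Φ : Set V} (hΦ : IsRootSystem Φ) {α : V} (hα : α ∈ Φ) : -α ∈ Φ := by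
  simpa [rootReflection_self] using hΦ.reflect_mem α hα α hα

theorem IsRootSystem.neg_mem_inter {Φ : Set V} (hΦ : IsRootSystem Φ) (K : Submodule ℝ V) :
    ∀ α ∈ Φ ∩ (K : Set V), -α ∈ Φ ∩ (K : Set V) :=
  fun _ hα => ⟨hΦ.neg_mem hα.1, K.neg_mem hα.2⟩

@[elab_as_elim]
theorem Set.Finite.induction_on_lt_apply {α β : Type*} [Preorder β] {s : Set α} (hs : s.Finite)
    (f : α → β) {p : α → Prop} (step : ∀ a ∈ s, (∀ b ∈ s, f b < f a → p b) → p a) {a : α}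
    (ha : a ∈ s) : p a :=
  (Set.wellFoundedOn_image.mp (hs.image f).wellFoundedOn).induction ha step

def simpleRoots (P : Set V) : Set V := {α | IsSimpleRoot P α}

theorem IsRootSystem.sub_mem_of_inner_pos {Φ : Set V} (hΦ : IsRootSystem Φ) {α β : V}
    (hα : α ∈ Φ) (hβ : β ∈ Φ) (hβα : β ≠ α) (hβα' : β ≠ -α) (hpos : 0 < ⟪α, β⟫) :
    α - β ∈ Φ := by
  obtain ⟨k, hk⟩ := hΦ.crystal α hα β hβ
  obtain ⟨k', hk'⟩ := hΦ.crystal β hβ α hα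
  rw [real_inner_comm α β] at hk
  have hA : 0 < ⟪α, α⟫ := real_inner_self_pos.mpr (hΦ.ne_zero α hα)
  have hB : 0 < ⟪β, β⟫ := real_inner_self_pos.mpr (hΦ.ne_zero β hβ)
  have hk0 : (0 : ℝ) < k := hk ▸ by positivity
  have hk'0 : (0 : ℝ) < k' := hk' ▸ by positivity
  -- `k k' = 4 cos² θ < 4` unless `β` is a multiple of `α`
  have hone : k = 1 ∨ k' = 1 := by
    by_contra! hk2
    have h2 : (2 : ℤ) ≤ k ∧ (2 : ℤ) ≤ k' := by
      have : (0 : ℤ) < k ∧ (0 : ℤ) < k' := ⟨by exact_mod_cast hk0, by exact_mod_cast hk'0⟩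
      omega
    have hCS : ⟪α, α⟫ * ⟪β, β⟫ ≤ ⟪α, β⟫ * ⟪α, β⟫ := by
      have := mul_le_mul (Int.cast_le.mpr h2.1 : ((2 : ℤ) : ℝ) ≤ k)
        (Int.cast_le.mpr h2.2 : ((2 : ℤ) : ℝ) ≤ k') (by norm_num) hk0.le
      rw [← hk, ← hk', div_mul_div_comm, le_div_iff₀ (by positivity)] at this
      push_cast at this
      nlinarith
    have hnorm : ⟪α, β⟫ = ‖α‖ * ‖β‖ := by
      rw [real_inner_self_eq_norm_sq, real_inner_self_eq_norm_sq] at hCS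
      nlinarith [real_inner_le_norm α β, norm_nonneg α, norm_nonneg β]
    obtain ⟨-, r, -, rfl⟩ := (abs_real_inner_div_norm_mul_norm_eq_one_iff α β).mp (by
      rw [hnorm, div_self (hnorm ▸ hpos).ne', abs_one])
    rcases hΦ.reduced α hα r hβ with rfl | rfl <;> simp_all
  rcases hone with rfl | rfl
  · have h1 : corootPairing α β = 1 := by rw [corootPairing, hk, Int.cast_one]
    have := hΦ.neg_mem (hΦ.reflect_mem α hα β hβ)
    rwa [rootReflection_apply, h1, one_smul, neg_sub] at this
  · have h1 : corootPairing β α = 1 := by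
      rw [corootPairing, real_inner_comm α β, hk', Int.cast_one]
    have := hΦ.reflect_mem β hβ α hα
    rwa [rootReflection_apply, h1, one_smul] at this

theorem mem_invSet {Q : Set V} {w : V ≃ₗᵢ[ℝ] V} {β : V} :
    β ∈ invSet Q w ↔ β ∈ Q ∧ -(w⁻¹ β) ∈ Q := by
  refine and_congr_right fun _ => ⟨?_, fun h => ⟨w⁻¹ β, Set.mem_neg.mpr h, w.apply_symm_apply β⟩⟩
  rintro ⟨γ, hγ, rfl⟩
  simpa using hγ

theorem rootReflection_mul_inv_apply (α : V) (w : V ≃ₗᵢ[ℝ] V) (x : V) :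
    (rootReflection α * w)⁻¹ x = w⁻¹ (rootReflection α x) := by
  simp [rootReflection_inv]

theorem exists_list_of_mem_parabolic {R : Set V} {w : V ≃ₗᵢ[ℝ] V} (hw : w ∈ parabolic R) :
    ∃ l : List V, (∀ α ∈ l, α ∈ R) ∧ (l.map rootReflection).prod = w := by
  induction hw using Subgroup.closure_induction with
  | mem g hg =>
    obtain ⟨α, hα, rfl⟩ := hg
    exact ⟨[α], by simpa using hα, by simp⟩
  | one => exact ⟨[], by simp, rfl⟩
  | mul a b _ _ ha hb =>
    obtain ⟨la, hla, rfl⟩ := ha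
    obtain ⟨lb, hlb, rfl⟩ := hb
    exact ⟨la ++ lb, by simpa using fun α hα => (hα.elim (hla α) (hlb α)), by simp⟩
  | inv a _ ha =>
    obtain ⟨l, hl, rfl⟩ := ha
    exact ⟨l.reverse, by simpa using hl,
      by simp [List.prod_inv_reverse, Function.comp_def, rootReflection_inv]⟩

namespace IsPositiveSystem

variable {Φ P : Set V}

theorem exists_linearMap_pos (hP : IsPositiveSystem Φ P) :
    ∃ h : V →ₗ[ℝ] ℝ, ∀ α ∈ P, 0 < h α := by
  obtain ⟨h, -, rfl⟩ := hP
  exact ⟨h, fun α hα => hα.2⟩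

theorem subset (hP : IsPositiveSystem Φ P) : P ⊆ Φ := by
  obtain ⟨h, -, rfl⟩ := hP
  exact fun α hα => hα.1

theorem neg_notMem (hP : IsPositiveSystem Φ P) {α : V} (hα : α ∈ P) : -α ∉ P := by
  obtain ⟨h, -, rfl⟩ := hP
  intro hneg
  linarith [hα.2, hneg.2, h.map_neg α]

theorem neg_mem_iff (hΦ : IsRootSystem Φ) (hP : IsPositiveSystem Φ P) {α : V} (hα : α ∈ Φ) :
    -α ∈ P ↔ α ∉ P := by
  refine ⟨fun hneg hpos => hP.neg_notMem hpos hneg, fun hα' => ?_⟩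
  obtain ⟨h, hne, rfl⟩ := hP
  refine ⟨hΦ.neg_mem hα, ?_⟩
  have : h α < 0 := lt_of_le_of_ne (not_lt.mp fun hlt => hα' ⟨hα, hlt⟩) (hne α hα)
  simpa using this

theorem finite (hΦ : IsRootSystem Φ) (hP : IsPositiveSystem Φ P) : P.Finite :=
  hΦ.finite.subset hP.subset

theorem mem_iff_of_imp (hΦ : IsRootSystem Φ) (hP : IsPositiveSystem Φ P) {S : Set V}
    (hSΦ : S ⊆ Φ) (hS : ∀ α ∈ S, -α ∈ S) {f : V → V} (hf : ∀ α, f (-α) = -f α)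
    (himp : ∀ α ∈ S, α ∈ P → f α ∈ P) {α : V} (hα : α ∈ S) : f α ∈ P ↔ α ∈ P := by
  refine ⟨fun hfα => by_contra fun hαP => hP.neg_notMem hfα ?_, himp α hα⟩
  rw [← hf]
  exact himp (-α) (hS α hα) ((hP.neg_mem_iff hΦ (hSΦ hα)).mpr hαP)

theorem forall_mem_iff_of_forall_pos (hΦ : IsRootSystem Φ) (hP : IsPositiveSystem Φ P)
    {S : Set V} (hSΦ : S ⊆ Φ) (hS : ∀ α ∈ S, -α ∈ S) {g g' : V ≃ₗᵢ[ℝ] V}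
    (hg : ∀ α ∈ S, g α ∈ Φ) (hg' : ∀ α ∈ S, g' α ∈ Φ)
    (hpos : ∀ α ∈ S, α ∈ P → (g α ∈ P ↔ g' α ∈ P)) (α : V) (hα : α ∈ S) :
    g α ∈ P ↔ g' α ∈ P := by
  by_cases hαP : α ∈ P
  · exact hpos α hα hαP
  have := hpos (-α) (hS α hα) ((hP.neg_mem_iff hΦ (hSΦ hα)).mpr hαP)
  rwa [map_neg, map_neg, hP.neg_mem_iff hΦ (hg α hα), hP.neg_mem_iff hΦ (hg' α hα),
    not_iff_not] at this

theorem exists_nonneg_combination (hΦ : IsRootSystem Φ) (hP : IsPositiveSystem Φ P) {α : V}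
    (hα : α ∈ P) : ∃ f : V →₀ ℝ, f ∈ Finsupp.supported ℝ ℝ (simpleRoots P) ∧ (∀ x, 0 ≤ f x) ∧
      Finsupp.linearCombination ℝ id f = α := by
  obtain ⟨h, hpos⟩ := hP.exists_linearMap_pos
  refine (hP.finite hΦ).induction_on_lt_apply h (fun α hα ih => ?_) hα
  by_cases hs : IsSimpleRoot P α
  · exact ⟨Finsupp.single α 1, Finsupp.single_mem_supported ℝ 1 hs,
      fun x => by by_cases hx : α = x <;> simp [hx], by simp⟩
  obtain ⟨β, hβ, γ, hγ, rfl⟩ : ∃ β ∈ P, ∃ γ ∈ P, α = β + γ := by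
    simpa [IsSimpleRoot, hα] using hs
  obtain ⟨f, hf, hf0, hfβ⟩ := ih β hβ (by simp [hpos γ hγ])
  obtain ⟨g, hg, hg0, hgγ⟩ := ih γ hγ (by simp [hpos β hβ])
  exact ⟨f + g, add_mem hf hg, fun x => add_nonneg (hf0 x) (hg0 x), by rw [map_add, hfβ, hgγ]⟩

theorem inner_nonpos (hΦ : IsRootSystem Φ) (hP : IsPositiveSystem Φ P) {α β : V}
    (hα : α ∈ simpleRoots P) (hβ : β ∈ simpleRoots P) (hαβ : α ≠ β) : ⟪α, β⟫ ≤ 0 := by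
  by_contra! hpos
  have hβα : β ≠ -α := fun h => hP.neg_notMem hα.1 (h ▸ hβ.1)
  have hsub := hΦ.sub_mem_of_inner_pos (hP.subset hα.1) (hP.subset hβ.1) hαβ.symm hβα hpos
  by_cases h : α - β ∈ P
  · exact hα.2 ⟨β, hβ.1, α - β, h, by abel⟩
  · exact hβ.2 ⟨α, hα.1, -(α - β), (hP.neg_mem_iff hΦ hsub).mpr h, by abel⟩

theorem linearIndepOn_simpleRoots (hΦ : IsRootSystem Φ) (hP : IsPositiveSystem Φ P) :
    LinearIndepOn ℝ id (simpleRoots P) := by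
  obtain ⟨h, hpos⟩ := hP.exists_linearMap_pos
  suffices key : ∀ l ∈ Finsupp.supported ℝ ℝ (simpleRoots P),
      Finsupp.linearCombination ℝ id l = 0 → ∀ x, l x ≤ 0 by
    refine linearIndepOn_iff.mpr fun l hl hl0 => Finsupp.ext fun x => le_antisymm
      (key l hl hl0 x) ?_
    simpa using key (-l) (neg_mem hl) (by rw [map_neg, hl0, neg_zero]) x
  intro l hl hl0 x
  classical
  rw [Finsupp.mem_supported] at hl
  -- the positive and the negative part of the relation are equal and pairwise obtuse, hence zero
  have hsplit : ∑ y ∈ l.support.filter (0 < l ·), l y • y =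
      ∑ z ∈ l.support.filter (¬ 0 < l ·), (-l z) • z := by
    rw [Finsupp.linearCombination_apply, Finsupp.sum,
      ← Finset.sum_filter_add_sum_filter_not _ (0 < l ·)] at hl0
    simp only [neg_smul, Finset.sum_neg_distrib]
    exact eq_neg_of_add_eq_zero_left hl0
  have hv : ∑ y ∈ l.support.filter (0 < l ·), l y • y = 0 := by
    rw [← real_inner_self_nonpos]
    nth_rewrite 2 [hsplit]
    simp only [sum_inner, inner_sum, real_inner_smul_left, real_inner_smul_right]
    refine Finset.sum_nonpos fun z hz => Finset.sum_nonpos fun y hy => ?_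
    replace hy := Finset.mem_filter.mp hy
    replace hz := Finset.mem_filter.mp hz
    have hyz : y ≠ z := by rintro rfl; exact hz.2 hy.2
    exact mul_nonpos_of_nonneg_of_nonpos (neg_nonneg.mpr (not_lt.mp hz.2))
      (mul_nonpos_of_nonneg_of_nonpos hy.2.le (hP.inner_nonpos hΦ (hl hy.1) (hl hz.1) hyz))
  by_contra! hx
  have hx' : x ∈ l.support := Finsupp.mem_support_iff.mpr hx.ne'
  have : 0 < h (∑ y ∈ l.support.filter (0 < l ·), l y • y) := by
    simp only [map_sum, map_smul, smul_eq_mul]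
    refine Finset.sum_pos' (fun y hy => ?_)
      ⟨x, Finset.mem_filter.mpr ⟨hx', hx⟩, mul_pos hx (hpos x (hl hx').1)⟩
    replace hy := Finset.mem_filter.mp hy
    exact (mul_pos hy.2 (hpos y (hl hy.1).1)).le
  rw [hv, map_zero] at this
  exact lt_irrefl 0 this

theorem eq_of_linearCombination_eq (hΦ : IsRootSystem Φ) (hP : IsPositiveSystem Φ P)
    {f g : V →₀ ℝ} (hf : f ∈ Finsupp.supported ℝ ℝ (simpleRoots P))
    (hg : g ∈ Finsupp.supported ℝ ℝ (simpleRoots P))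
    (hfg : Finsupp.linearCombination ℝ id f = Finsupp.linearCombination ℝ id g) : f = g :=
  sub_eq_zero.mp (linearIndepOn_iff.mp (hP.linearIndepOn_simpleRoots hΦ) _ (sub_mem hf hg)
    (by rw [map_sub, hfg, sub_self]))

theorem exists_nonneg_combination_of_mem_span (hΦ : IsRootSystem Φ)
    (hP : IsPositiveSystem Φ P) {J : Set V} (hJ : J ⊆ simpleRoots P) {β : V} (hβ : β ∈ P)
    (hβJ : β ∈ Submodule.span ℝ J) : ∃ f : V →₀ ℝ, f ∈ Finsupp.supported ℝ ℝ J ∧ (∀ x, 0 ≤ f x) ∧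
      Finsupp.linearCombination ℝ id f = β := by
  obtain ⟨c, hc, hcβ⟩ := (Finsupp.mem_span_image_iff_linearCombination ℝ).mp
    (by rwa [Set.image_id] : β ∈ Submodule.span ℝ (id '' J))
  obtain ⟨f, hf, hf0, hfβ⟩ := hP.exists_nonneg_combination hΦ hβ
  obtain rfl := hP.eq_of_linearCombination_eq hΦ hf (Finsupp.supported_mono hJ hc)
    (hfβ.trans hcβ.symm)
  exact ⟨f, hc, hf0, hfβ⟩

theorem exists_simpleRoot_inner_pos (hΦ : IsRootSystem Φ) (hP : IsPositiveSystem Φ P)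
    {γ : V} (hγ : γ ∈ P) : ∃ x ∈ simpleRoots P, 0 < ⟪γ, x⟫ := by
  obtain ⟨f, hf, hf0, rfl⟩ := hP.exists_nonneg_combination hΦ hγ
  by_contra! hle
  refine hΦ.ne_zero _ (hP.subset hγ) (real_inner_self_nonpos.mp ?_)
  nth_rewrite 2 [Finsupp.linearCombination_apply]
  rw [Finsupp.sum, inner_sum]
  exact Finset.sum_nonpos fun x hx => by
    rw [real_inner_smul_right]
    exact mul_nonpos_of_nonneg_of_nonpos (hf0 x) (hle x (hf hx))

theorem rootReflection_mem (hΦ : IsRootSystem Φ) (hP : IsPositiveSystem Φ P) {α β : V}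
    (hα : α ∈ simpleRoots P) (hβ : β ∈ P) (hβα : β ≠ α) : rootReflection α β ∈ P := by
  have hαΦ := hP.subset hα.1
  have hsβ : rootReflection α β ∈ Φ := hΦ.reflect_mem α hαΦ β (hP.subset hβ)
  by_contra hneg
  obtain ⟨f, hf, hf0, hfβ⟩ := hP.exists_nonneg_combination hΦ hβ
  obtain ⟨g, hg, hg0, hgβ⟩ :=
    hP.exists_nonneg_combination hΦ ((hP.neg_mem_iff hΦ hsβ).mpr hneg)
  -- `β - s_α β` is a multiple of `α`, so both expansions are supported on `{α}`
  have hfg : f + g = Finsupp.single α (corootPairing α β) :=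
    hP.eq_of_linearCombination_eq hΦ (add_mem hf hg) (Finsupp.single_mem_supported ℝ _ hα)
      (by rw [map_add, hfβ, hgβ, Finsupp.linearCombination_single, rootReflection_apply]; simp)
  have hf_single : f = Finsupp.single α (f α) := by
    ext x
    by_cases hx : x = α
    · simp [hx]
    · have := DFunLike.congr_fun hfg x
      rw [Finsupp.add_apply, Finsupp.single_eq_of_ne hx] at this
      rw [Finsupp.single_eq_of_ne hx]
      linarith [hf0 x, hg0 x]
  rw [hf_single, Finsupp.linearCombination_single, id] at hfβ
  rcases hΦ.reduced α hαΦ (f α) (hfβ ▸ hP.subset hβ) with h1 | h1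
  · exact hβα (by rw [← hfβ, h1, one_smul])
  · linarith [hf0 α]

theorem invSet_finite (hΦ : IsRootSystem Φ) (hP : IsPositiveSystem Φ P) (w : V ≃ₗᵢ[ℝ] V) :
    (invSet P w).Finite :=
  (hP.finite hΦ).subset Set.inter_subset_left

theorem invSet_one (hP : IsPositiveSystem Φ P) : invSet P 1 = ∅ :=
  Set.eq_empty_of_forall_notMem fun β hβ => by
    simpa using hP.neg_notMem (mem_invSet.mp hβ).1 (mem_invSet.mp hβ).2

theorem rootReflection_mem_iff (hΦ : IsRootSystem Φ) (hP : IsPositiveSystem Φ P) {α β : V}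
    (hα : α ∈ simpleRoots P) (hβα : β ≠ α) (hβα' : β ≠ -α) :
    rootReflection α β ∈ P ↔ β ∈ P := by
  refine ⟨fun h => ?_, fun h => hP.rootReflection_mem hΦ hα h hβα⟩
  rw [← rootReflection_rootReflection α β]
  refine hP.rootReflection_mem hΦ hα h fun hα' => hβα' ?_
  rw [← rootReflection_rootReflection α β, hα', rootReflection_self]

theorem invSet_rootReflection_mul (hΦ : IsRootSystem Φ) (hP : IsPositiveSystem Φ P) {α : V}
    (hα : α ∈ simpleRoots P) {w : V ≃ₗᵢ[ℝ] V} (hw : w ∈ weylGroup Φ) (hαw : α ∉ invSet P w) :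
    invSet P (rootReflection α * w) = insert α (rootReflection α '' invSet P w) := by
  have hwα : w⁻¹ α ∈ P := by
    have hΦα := (hΦ.apply_mem_iff (inv_mem hw) α).mpr (hP.subset hα.1)
    rw [← not_not (a := _ ∈ P), ← hP.neg_mem_iff hΦ hΦα]
    exact fun h => hαw (mem_invSet.mpr ⟨hα.1, h⟩)
  ext β
  rw [Set.image_eq_preimage_of_inverse (rootReflection_rootReflection α)
    (rootReflection_rootReflection α)]
  simp only [Set.mem_insert_iff, Set.mem_preimage, mem_invSet, rootReflection_mul_inv_apply]
  by_cases hβα : β = α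
  · subst hβα
    simpa [rootReflection_self, hα.1] using hwα
  by_cases hβα' : β = -α
  · subst hβα'
    simpa [rootReflection_self, hP.neg_notMem hα.1, hβα] using
      fun hα' h => hαw (mem_invSet.mpr ⟨hα', h⟩)
  simp [hβα, hP.rootReflection_mem_iff hΦ hα hβα hβα']

theorem ncard_invSet_rootReflection_mul (hΦ : IsRootSystem Φ) (hP : IsPositiveSystem Φ P)
    {α : V} (hα : α ∈ simpleRoots P) {w : V ≃ₗᵢ[ℝ] V} (hw : w ∈ weylGroup Φ)
    (hαw : α ∉ invSet P w) :
    (invSet P (rootReflection α * w)).ncard = (invSet P w).ncard + 1 := by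
  rw [hP.invSet_rootReflection_mul hΦ hα hw hαw,
    Set.ncard_insert_of_notMem _ ((hP.invSet_finite hΦ w).image _),
    Set.ncard_image_of_injective _ (rootReflection α).injective]
  rintro ⟨γ, hγ, hγα⟩
  rw [← rootReflection_rootReflection α γ, hγα, rootReflection_self] at hγ
  exact hP.neg_notMem hα.1 (mem_invSet.mp hγ).1

theorem ncard_invSet_rootReflection_mul_of_mem (hΦ : IsRootSystem Φ)
    (hP : IsPositiveSystem Φ P) {α : V} (hα : α ∈ simpleRoots P) {w : V ≃ₗᵢ[ℝ] V}
    (hw : w ∈ weylGroup Φ) (hαw : α ∈ invSet P w) :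
    (invSet P (rootReflection α * w)).ncard + 1 = (invSet P w).ncard := by
  have hαw' : α ∉ invSet P (rootReflection α * w) := by
    rw [mem_invSet, rootReflection_mul_inv_apply, rootReflection_self, map_neg, neg_neg]
    exact fun h => hP.neg_notMem h.2 (mem_invSet.mp hαw).2
  have := hP.ncard_invSet_rootReflection_mul hΦ hα
    (mul_mem (rootReflection_mem_parabolic (hP.subset hα.1)) hw) hαw'
  rwa [← mul_assoc, rootReflection_mul_self, one_mul, eq_comm] at this

theorem prod_mem_weylGroup (hP : IsPositiveSystem Φ P) {l : List V}
    (hl : ∀ α ∈ l, IsSimpleRoot P α) : (l.map rootReflection).prod ∈ weylGroup Φ :=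
  prod_map_rootReflection_mem_parabolic fun α hα => hP.subset (hl α hα).1

theorem ncard_invSet_prod_le (hΦ : IsRootSystem Φ) (hP : IsPositiveSystem Φ P) {l : List V}
    (hl : ∀ α ∈ l, IsSimpleRoot P α) :
    (invSet P (l.map rootReflection).prod).ncard ≤ l.length := by
  induction l with
  | nil => simp [hP.invSet_one]
  | cons b t ih =>
    have hb : b ∈ simpleRoots P := hl b List.mem_cons_self
    have ht : ∀ α ∈ t, IsSimpleRoot P α := fun α hα => hl α (List.mem_cons_of_mem b hα)
    have htW := hP.prod_mem_weylGroup ht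
    simp only [List.map_cons, List.prod_cons, List.length_cons]
    by_cases hbt : b ∈ invSet P (t.map rootReflection).prod
    · have := hP.ncard_invSet_rootReflection_mul_of_mem hΦ hb htW hbt
      linarith [ih ht]
    · rw [hP.ncard_invSet_rootReflection_mul hΦ hb htW hbt]
      linarith [ih ht]

/-- The exchange condition. -/
theorem exists_rootReflection_mul_prod_eq (hΦ : IsRootSystem Φ) (hP : IsPositiveSystem Φ P)
    {l : List V} (hl : ∀ β ∈ l, IsSimpleRoot P β) {α : V} (hα : α ∈ P)
    (hαl : -((l.map rootReflection).prod⁻¹ α) ∈ P) :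
    ∃ l₁ β l₂, l = l₁ ++ β :: l₂ ∧
      rootReflection α * (l.map rootReflection).prod = ((l₁ ++ l₂).map rootReflection).prod := by
  induction l generalizing α with
  | nil => simp [hP.neg_notMem hα] at hαl
  | cons b t ih =>
    by_cases hαb : α = b
    · subst hαb
      exact ⟨[], α, t, rfl, by simp [← mul_assoc, rootReflection_mul_self]⟩
    have hb : b ∈ simpleRoots P := hl b List.mem_cons_self
    simp only [List.map_cons, List.prod_cons] at hαl
    rw [rootReflection_mul_inv_apply] at hαl
    obtain ⟨l₁, β, l₂, rfl, heq⟩ := ih (fun β hβ => hl β (List.mem_cons_of_mem b hβ))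
      (hP.rootReflection_mem hΦ hb hα hαb) hαl
    refine ⟨b :: l₁, β, l₂, rfl, ?_⟩
    have hconj : rootReflection α * rootReflection b =
        rootReflection b * rootReflection (rootReflection b α) := by
      rw [rootReflection_map, rootReflection_inv, ← mul_assoc, ← mul_assoc,
        rootReflection_mul_self, one_mul]
    simp only [List.map_cons, List.prod_cons, List.cons_append, ← mul_assoc, hconj]
    rw [mul_assoc, heq]

theorem exists_shorter_word (hΦ : IsRootSystem Φ) (hP : IsPositiveSystem Φ P) {l : List V}
    (hl : ∀ α ∈ l, IsSimpleRoot P α)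
    (hlt : (invSet P (l.map rootReflection).prod).ncard < l.length) :
    ∃ l' : List V, (∀ α ∈ l', IsSimpleRoot P α) ∧ l'.length < l.length ∧
      (l'.map rootReflection).prod = (l.map rootReflection).prod := by
  induction l with
  | nil => simp at hlt
  | cons b t ih =>
    have hb : b ∈ simpleRoots P := hl b List.mem_cons_self
    have ht : ∀ α ∈ t, IsSimpleRoot P α := fun α hα => hl α (List.mem_cons_of_mem b hα)
    by_cases hbt : b ∈ invSet P (t.map rootReflection).prod
    · obtain ⟨l₁, β, l₂, rfl, heq⟩ :=
        hP.exists_rootReflection_mul_prod_eq hΦ ht hb.1 (mem_invSet.mp hbt).2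
      refine ⟨l₁ ++ l₂, fun α hα => ht α ?_, by simp, by
        simpa only [List.map_cons, List.prod_cons] using heq.symm⟩
      simp only [List.mem_append, List.mem_cons] at hα ⊢
      tauto
    · simp only [List.map_cons, List.prod_cons, List.length_cons] at hlt ⊢
      rw [hP.ncard_invSet_rootReflection_mul hΦ hb (hP.prod_mem_weylGroup ht) hbt] at hlt
      obtain ⟨t', ht', hlen, heq⟩ := ih ht (by omega)
      refine ⟨b :: t', fun α hα => ?_, by simpa using hlen, by simp [heq]⟩
      rcases List.mem_cons.mp hα with rfl | hα
      exacts [hb, ht' α hα]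

theorem rootReflection_mem_parabolic_simpleRoots (hΦ : IsRootSystem Φ)
    (hP : IsPositiveSystem Φ P) {γ : V} (hγ : γ ∈ P) :
    rootReflection γ ∈ parabolic (simpleRoots P) := by
  obtain ⟨h, hpos⟩ := hP.exists_linearMap_pos
  refine (hP.finite hΦ).induction_on_lt_apply h (fun γ hγ ih => ?_) hγ
  by_cases hs : γ ∈ simpleRoots P
  · exact rootReflection_mem_parabolic hs
  obtain ⟨x, hx, hγx⟩ := hP.exists_simpleRoot_inner_pos hΦ hγ
  have hγx' : γ ≠ x := by rintro rfl; exact hs hx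
  -- `s_x γ` is a positive root of smaller height, and `s_γ` is conjugate by `s_x` to its reflection
  have hlt : h (rootReflection x γ) < h γ := by
    rw [rootReflection_apply, map_sub, map_smul, smul_eq_mul, sub_lt_self_iff, corootPairing,
      real_inner_comm]
    exact mul_pos (div_pos (by linarith)
      (real_inner_self_pos.mpr (hΦ.ne_zero x (hP.subset hx.1)))) (hpos x hx.1)
  have hconj := rootReflection_map (rootReflection x) (rootReflection x γ)
  rw [rootReflection_rootReflection, rootReflection_inv] at hconj
  rw [hconj]
  exact mul_mem (mul_mem (rootReflection_mem_parabolic hx)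
    (ih _ (hP.rootReflection_mem hΦ hx hγ hγx') hlt)) (rootReflection_mem_parabolic hx)

theorem weylGroup_eq_parabolic_simpleRoots (hΦ : IsRootSystem Φ) (hP : IsPositiveSystem Φ P) :
    weylGroup Φ = parabolic (simpleRoots P) := by
  refine le_antisymm (Subgroup.closure_le _ |>.mpr ?_)
    (parabolic_mono fun α hα => hP.subset hα.1)
  rintro _ ⟨α, hα, rfl⟩
  by_cases hαP : α ∈ P
  · exact hP.rootReflection_mem_parabolic_simpleRoots hΦ hαP
  · rw [← rootReflection_neg]
    exact hP.rootReflection_mem_parabolic_simpleRoots hΦ ((hP.neg_mem_iff hΦ hα).mpr hαP)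

theorem wlen_eq_ncard (hΦ : IsRootSystem Φ) (hP : IsPositiveSystem Φ P) {w : V ≃ₗᵢ[ℝ] V}
    (hw : w ∈ weylGroup Φ) : wlen P w = (invSet P w).ncard := by
  rw [hP.weylGroup_eq_parabolic_simpleRoots hΦ] at hw
  obtain ⟨l₀, hl₀, hl₀w⟩ := exists_list_of_mem_parabolic hw
  have hne : {n | ∃ l : List V, (∀ α ∈ l, IsSimpleRoot P α) ∧ l.length = n ∧
      (l.map rootReflection).prod = w}.Nonempty := ⟨_, l₀, hl₀, rfl, hl₀w⟩
  obtain ⟨l, hl, hlen, rfl⟩ := Nat.sInf_mem hne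
  rw [wlen, ← hlen]
  refine le_antisymm ?_ (hP.ncard_invSet_prod_le hΦ hl)
  by_contra! hlt
  obtain ⟨l', hl', hlen', heq⟩ := hP.exists_shorter_word hΦ hl hlt
  exact hlen'.not_ge (hlen ▸ Nat.sInf_le ⟨l', hl', rfl, heq⟩)

theorem wlen_rootReflection_mul_lt (hΦ : IsRootSystem Φ) (hP : IsPositiveSystem Φ P) {α : V}
    (hα : α ∈ simpleRoots P) {w : V ≃ₗᵢ[ℝ] V} (hw : w ∈ weylGroup Φ) (hαw : α ∈ invSet P w) :
    wlen P (rootReflection α * w) < wlen P w := by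
  rw [hP.wlen_eq_ncard hΦ (mul_mem (rootReflection_mem_parabolic (hP.subset hα.1)) hw),
    hP.wlen_eq_ncard hΦ hw, ← hP.ncard_invSet_rootReflection_mul_of_mem hΦ hα hw hαw]
  exact Nat.lt_succ_self _

theorem apply_mem_diff_span_iff (hΦ : IsRootSystem Φ) (hP : IsPositiveSystem Φ P) {J : Set V}
    (hJ : J ⊆ simpleRoots P) {u : V ≃ₗᵢ[ℝ] V} (hu : u ∈ parabolic J) (x : V) :
    u x ∈ P \ (Submodule.span ℝ J : Set V) ↔ x ∈ P \ (Submodule.span ℝ J : Set V) := by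
  refine apply_iff_of_mem_parabolic (fun α hα x hx => ⟨?_, ?_⟩) hu x
  · exact hP.rootReflection_mem hΦ (hJ hα) hx.1
      (by rintro rfl; exact hx.2 (Submodule.subset_span hα))
  · exact mt (apply_mem_span_iff (rootReflection_mem_parabolic hα) x).mp hx.2

theorem apply_mem_of_nonneg_combination (hP : IsPositiveSystem Φ P) {g : V ≃ₗᵢ[ℝ] V}
    {f : V →₀ ℝ} (hf : ∀ x, 0 ≤ f x) (hgf : g (Finsupp.linearCombination ℝ id f) ∈ Φ)
    (hg : ∀ x ∈ f.support, g x ∈ P) : g (Finsupp.linearCombination ℝ id f) ∈ P := by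
  obtain ⟨h, hne, rfl⟩ := hP
  refine ⟨hgf, lt_of_le_of_ne ?_ (hne _ hgf).symm⟩
  rw [Finsupp.linearCombination_apply, Finsupp.sum, map_sum, map_sum]
  exact Finset.sum_nonneg fun x hx => by
    rw [map_smul, map_smul, smul_eq_mul]
    exact mul_nonneg (hf x) (hg x hx).2.le

theorem mem_minReps_iff (hΦ : IsRootSystem Φ) (hP : IsPositiveSystem Φ P) {J : Set V}
    (hJ : J ⊆ simpleRoots P) {v : V ≃ₗᵢ[ℝ] V} :
    v ∈ minReps Φ P J ↔
      v ∈ weylGroup Φ ∧ ∀ β ∈ Φ ∩ (Submodule.span ℝ J : Set V), β ∈ P → v⁻¹ β ∈ P := by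
  refine and_congr_right fun hv => ⟨fun hmin β hβ hβP => by_contra fun hvβ => ?_,
    fun hpos u hu => ?_⟩
  · obtain ⟨f, hfJ, hf0, rfl⟩ := hP.exists_nonneg_combination_of_mem_span hΦ hJ hβP hβ.2
    obtain ⟨x, hx, hvx⟩ : ∃ x ∈ f.support, v⁻¹ x ∉ P := by
      by_contra! hall
      exact hvβ (hP.apply_mem_of_nonneg_combination hf0
        ((hΦ.apply_mem_iff (inv_mem hv) _).mpr hβ.1) hall)
    have hxJ : x ∈ J := hfJ hx
    have hxv : x ∈ invSet P v := mem_invSet.mpr ⟨(hJ hxJ).1, (hP.neg_mem_iff hΦ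
      ((hΦ.apply_mem_iff (inv_mem hv) x).mpr (hP.subset (hJ hxJ).1))).mpr hvx⟩
    exact (hP.wlen_rootReflection_mul_lt hΦ (hJ hxJ) hv hxv).not_ge
      (hmin _ (rootReflection_mem_parabolic hxJ))
  · -- `u` maps the inversions of `v`, which lie outside `span J`, to inversions of `u * v`
    have huv : u * v ∈ weylGroup Φ :=
      mul_mem (parabolic_mono (fun α hα => hP.subset (hJ hα).1) hu) hv
    rw [hP.wlen_eq_ncard hΦ hv, hP.wlen_eq_ncard hΦ huv,
      ← Set.ncard_image_of_injective _ u.injective]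
    refine Set.ncard_le_ncard ?_ (hP.invSet_finite hΦ _)
    rintro _ ⟨β, hβ, rfl⟩
    obtain ⟨hβP, hβv⟩ := mem_invSet.mp hβ
    have hβJ : β ∉ Submodule.span ℝ J := fun hβJ =>
      hP.neg_notMem (hpos β ⟨hP.subset hβP, hβJ⟩ hβP) hβv
    refine mem_invSet.mpr ⟨((hP.apply_mem_diff_span_iff hΦ hJ hu β).mpr ⟨hβP, hβJ⟩).1, ?_⟩
    simpa using hβv

theorem invSet_eq_invSet_inter_iff (hΦ : IsRootSystem Φ) (hP : IsPositiveSystem Φ P)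
    {Δ : Set V} (hΔΦ : Δ ⊆ Φ) (hΔ : ∀ α ∈ Δ, -α ∈ Δ) {x w : V ≃ₗᵢ[ℝ] V}
    (hx : ∀ α ∈ Δ, x⁻¹ α ∈ Δ) (hw : w ∈ weylGroup Φ) :
    invSet (Δ ∩ P) x = invSet P w ∩ Δ ↔ ∀ α ∈ Δ, (x⁻¹ α ∈ P ↔ w⁻¹ α ∈ P) := by
  have hwΔ : ∀ α ∈ Δ, w⁻¹ α ∈ Φ := fun α hα => (hΦ.apply_mem_iff (inv_mem hw) α).mpr (hΔΦ hα)
  refine Set.ext_iff.trans ⟨fun h => hP.forall_mem_iff_of_forall_pos hΦ hΔΦ hΔ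
    (fun α hα => hΔΦ (hx α hα)) hwΔ fun α hα hαP => ?_, fun h α => ?_⟩
  · have := h α
    simp only [mem_invSet, Set.mem_inter_iff, hα, hαP, hΔ _ (hx α hα), true_and, and_true,
      hP.neg_mem_iff hΦ (hΔΦ (hx α hα)), hP.neg_mem_iff hΦ (hwΔ α hα)] at this
    exact not_iff_not.mp this
  · simp only [mem_invSet, Set.mem_inter_iff]
    by_cases hα : α ∈ Δ
    · simp only [hα, hΔ _ (hx α hα), true_and, and_true, hP.neg_mem_iff hΦ (hΔΦ (hx α hα)),
        hP.neg_mem_iff hΦ (hwΔ α hα), h α hα]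
    · simp [hα]

theorem inv_apply_mem_iff_of_mem_minReps (hΦ : IsRootSystem Φ) (hP : IsPositiveSystem Φ P)
    {J : Set V} (hJ : J ⊆ simpleRoots P) {v : V ≃ₗᵢ[ℝ] V} (hv : v ∈ minReps Φ P J) {β : V}
    (hβ : β ∈ Φ ∩ (Submodule.span ℝ J : Set V)) : v⁻¹ β ∈ P ↔ β ∈ P :=
  hP.mem_iff_of_imp hΦ Set.inter_subset_left (hΦ.neg_mem_inter _) (map_neg _)
    ((hP.mem_minReps_iff hΦ hJ).mp hv).2 hβ

theorem invSet_conj_eq_iff (hΦ : IsRootSystem Φ) (hP : IsPositiveSystem Φ P) {Δ Ψ : Set V}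
    (hΔΦ : Δ ⊆ Φ) (hΔ : ∀ α ∈ Δ, -α ∈ Δ) {v t w : V ≃ₗᵢ[ℝ] V} (hvΔ : ∀ α, v α ∈ Ψ ↔ α ∈ Δ)
    (ht : ∀ β, t β ∈ Ψ ↔ β ∈ Ψ) (hvΨ : ∀ β ∈ Ψ, v⁻¹ β ∈ P ↔ β ∈ P) (hw : w ∈ weylGroup Φ) :
    invSet (Δ ∩ P) (v⁻¹ * t * v) = invSet P w ∩ Δ ↔
      ∀ β ∈ Ψ, (β ∈ P ↔ w⁻¹ (v⁻¹ (t β)) ∈ P) := by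
  have hΨΔ : ∀ β, v⁻¹ (t β) ∈ Δ ↔ β ∈ Ψ := fun β => by
    rw [← hvΔ, ← ht β]
    simp
  have hx : ∀ α ∈ Δ, (v⁻¹ * t * v)⁻¹ α ∈ Δ := fun α hα => by
    rw [← hvΔ, ← ht]
    simpa using (hvΔ α).mpr hα
  rw [hP.invSet_eq_invSet_inter_iff hΦ hΔΦ hΔ hx hw]
  -- substitute `α = v⁻¹ (t β)` with `β ∈ Ψ`
  refine ⟨fun h β hβ => ?_, fun h α hα => ?_⟩
  · have := h _ ((hΨΔ β).mpr hβ)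
    rwa [show (v⁻¹ * t * v)⁻¹ (v⁻¹ (t β)) = v⁻¹ β by simp, hvΨ β hβ] at this
  · have hβ : t⁻¹ (v α) ∈ Ψ := (ht _).mp (by simpa using (hvΔ α).mpr hα)
    rw [show (v⁻¹ * t * v)⁻¹ α = v⁻¹ (t⁻¹ (v α)) by simp, hvΨ _ hβ]
    simpa using h _ hβ

end IsPositiveSystem

end

/-- characterization of the flattening via a parabolic factorization.
Here `Δ = Φ ∩ U` is a root subsystem with `v₁(Δ) = Φ^J`, and `f_Δ(w) = u'` is
expressed by its defining property `I_Δ(u') = I_Φ(w) ∩ Δ`. -/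
theorem flattening_eq_iff_factorization
    (Φ P : Set V) (hΦ : IsRootSystem Φ) (hP : IsPositiveSystem Φ P)
    (U : Submodule ℝ V) (J : Set V) (hJ : ∀ α ∈ J, IsSimpleRoot P α)
    (v₁ : V ≃ₗᵢ[ℝ] V) (hv₁ : v₁ ∈ minReps Φ P J)
    (hconj : ⇑v₁ '' (Φ ∩ (U : Set V)) = Φ ∩ (Submodule.span ℝ J : Set V))
    (u : V ≃ₗᵢ[ℝ] V) (hu : u ∈ parabolic J)
    (w : V ≃ₗᵢ[ℝ] V) (hw : w ∈ weylGroup Φ) :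
    invSet (Φ ∩ (U : Set V) ∩ P) (v₁⁻¹ * u * v₁) = invSet P w ∩ (Φ ∩ (U : Set V)) ↔
      ∃ v₂ ∈ minReps Φ P J, w = v₁⁻¹ * u * v₂ := by
  have huW : u ∈ weylGroup Φ := parabolic_mono (fun α hα => hP.subset (hJ α hα).1) hu
  have hv₁Δ : ∀ α, v₁ α ∈ Φ ∩ (Submodule.span ℝ J : Set V) ↔ α ∈ Φ ∩ (U : Set V) :=
    fun α => hconj ▸ v₁.injective.mem_set_image
  have huΦJ : ∀ β, u β ∈ Φ ∩ (Submodule.span ℝ J : Set V) ↔ β ∈ Φ ∩ (Submodule.span ℝ J : Set V) :=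
    fun β => and_congr (hΦ.apply_mem_iff huW β) (apply_mem_span_iff hu β)
  have hfactor : (∃ v₂ ∈ minReps Φ P J, w = v₁⁻¹ * u * v₂) ↔ u⁻¹ * v₁ * w ∈ minReps Φ P J :=
    ⟨fun ⟨v₂, hv₂, hw⟩ => by rwa [hw, show u⁻¹ * v₁ * (v₁⁻¹ * u * v₂) = v₂ by group],
      fun h => ⟨_, h, by group⟩⟩
  rw [hP.invSet_conj_eq_iff hΦ Set.inter_subset_left (hΦ.neg_mem_inter U) hv₁Δ huΦJ
      (fun β hβ => hP.inv_apply_mem_iff_of_mem_minReps hΦ hJ hv₁ hβ) hw,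
    hfactor, hP.mem_minReps_iff hΦ hJ, and_iff_right (mul_mem (mul_mem (inv_mem huW) hv₁.1) hw)]
  simp only [mul_inv_rev, inv_inv, LinearIsometryEquiv.coe_mul, Function.comp_apply]
  exact ⟨fun h β hβ hβP => (h β hβ).mp hβP, fun h β hβ => (hP.mem_iff_of_imp hΦ
    Set.inter_subset_left (hΦ.neg_mem_inter _) (fun α => by simp) h hβ).symm⟩
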